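/- A Mal'cev term m (satisfying Σ ⊢ m(x,y,y) ≈ x and Σ ⊢ m(x,x,y) ≈ y) is weakly independent of each of its three argument positions, but if V(Σ) has an algebra with at least two elements, then m is not independent of any of its argument positions. -/

import Mathlib

/-! Weak independence is witnessed by `m(x, x, y) ≈ y` (positions 0 and 1) and
`m(y, x, x) ≈ y` (position 2). Independence at a position lets one change that argument
freely, so two instances of the Mal'cev identities differing only there, such as
`m(x, y, y) ≈ x` and `m(y, y, y) ≈ y`, give `x ≈ y`. -/


universe u

/-- A finitary algebraic signature. -/
structure Sig where
  ops : Type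
  ar : ops → ℕ

namespace UA

/-- Terms over the signature `S` with variables from `X`. -/
inductive Term (S : Sig) (X : Type) : Type where
  | var : X → Term S X
  | app : (o : S.ops) → (Fin (S.ar o) → Term S X) → Term S X

/-- Simultaneous substitution of terms for variables. -/
def Term.subst {S : Sig} {X Y : Type} (σ : X → Term S Y) : Term S X → Term S Y
  | .var x => σ x
  | .app o ts => .app o fun i => (ts i).subst σ

/-- Renaming (substitution of variables for variables). -/
def Term.rename {S : Sig} {X Y : Type} (φ : X → Y) (t : Term S X) : Term S Y :=
  t.subst fun x => .var (φ x)

/-- Equational provability from the set `Γ` of axioms (pairs of terms over the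
countable variable set `ℕ`), over arbitrary variable sets. -/
inductive Eqv {S : Sig} (Γ : Set (Term S ℕ × Term S ℕ)) :
    {X : Type} → Term S X → Term S X → Prop where
  | axm {X : Type} {l r : Term S ℕ} (h : (l, r) ∈ Γ) (σ : ℕ → Term S X) :
      Eqv Γ (l.subst σ) (r.subst σ)
  | refl {X : Type} (t : Term S X) : Eqv Γ t t
  | symm {X : Type} {t u : Term S X} : Eqv Γ t u → Eqv Γ u t
  | trans {X : Type} {t u v : Term S X} : Eqv Γ t u → Eqv Γ u v → Eqv Γ t v
  | congr {X : Type} (o : S.ops) {ts us : Fin (S.ar o) → Term S X} :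
      (∀ i, Eqv Γ (ts i) (us i)) → Eqv Γ (.app o ts) (.app o us)
  | sbst {X Y : Type} {t u : Term S X} (σ : X → Term S Y) :
      Eqv Γ t u → Eqv Γ (t.subst σ) (u.subst σ)

def termSetoid {S : Sig} (Γ : Set (Term S ℕ × Term S ℕ)) (X : Type) : Setoid (Term S X) :=
  ⟨Eqv Γ, ⟨fun t => .refl t, fun h => h.symm, fun h h' => h.trans h'⟩⟩

/-- The free algebra over the variable set `X` in the variety axiomatized by `Γ`:
terms modulo `Γ`-provable equality.  This is the object part of the free-algebra
functor `F_Σ`. -/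
def FreeAlg {S : Sig} (Γ : Set (Term S ℕ × Term S ℕ)) (X : Type) : Type :=
  Quotient (termSetoid Γ X)

/-- The action of the free-algebra functor `F_Σ` on maps: variable substitution. -/
def FreeAlg.map {S : Sig} {Γ : Set (Term S ℕ × Term S ℕ)} {X Y : Type} (φ : X → Y) :
    FreeAlg Γ X → FreeAlg Γ Y :=
  Quotient.map (Term.rename φ) fun _ _ h => h.sbst _

end UA

namespace UA

variable {S : Sig}

/-- A ternary term `t` is *weakly independent* of its `k`-th argument position
modulo `Γ`: substituting a variable `x` in position `k` and arbitrary variables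
elsewhere makes `t` provably equal to a term `q` in a single variable `y ≠ x`. -/
def WeakIndepAt (Γ : Set (Term S ℕ × Term S ℕ)) (t : Term S (Fin 3)) (k : Fin 3) : Prop :=
  ∃ (x y : ℕ) (v : Fin 3 → ℕ) (q : Term S Unit),
    x ≠ y ∧ v k = x ∧ Eqv Γ (t.rename v) (q.rename fun _ => y)

/-- A ternary term `t` is *independent* of its `k`-th argument position modulo `Γ`:
its value is provably unchanged when the variable in position `k` is replaced by a
fresh one (all variables distinct). -/
def IndepAt (Γ : Set (Term S ℕ × Term S ℕ)) (t : Term S (Fin 3)) (k : Fin 3) : Prop :=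
  Eqv Γ (t.rename fun j => if j = k then 0 else (j : ℕ) + 2)
        (t.rename fun j => if j = k then 1 else (j : ℕ) + 2)

variable {Γ : Set (Term S ℕ × Term S ℕ)}

theorem Term.subst_subst {X Y Z : Type} (σ : X → Term S Y) (τ : Y → Term S Z)
    (t : Term S X) : (t.subst σ).subst τ = t.subst fun x => (σ x).subst τ := by
  induction t with
  | var x => rfl
  | app o ts ih => exact congrArg (Term.app o) (funext ih)

theorem Term.rename_rename {X Y Z : Type} (φ : X → Y) (ψ : Y → Z) (t : Term S X) :
    (t.rename φ).rename ψ = t.rename (ψ ∘ φ) :=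
  Term.subst_subst _ _ t

theorem Eqv.rename {X Y : Type} {t u : Term S X} (h : Eqv Γ t u) (φ : X → Y) :
    Eqv Γ (t.rename φ) (u.rename φ) :=
  h.sbst _

theorem Eqv.rename_of_rename_eqv_var {X Y : Type} {t : Term S X} {v : X → ℕ} {x : ℕ}
    (h : Eqv Γ (t.rename v) (.var x)) (φ : ℕ → Y) :
    Eqv Γ (t.rename (φ ∘ v)) (.var (φ x)) := by
  have h' := h.rename φ
  rwa [Term.rename_rename] at h'

section Malcev

variable {m : Term S (Fin 3)}

theorem eqv_malcev_left (hm : Eqv Γ (m.rename ![0, 1, 1]) (.var 0)) {X : Type} (a b : X) :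
    Eqv Γ (m.rename ![a, b, b]) (.var a) := by
  convert hm.rename_of_rename_eqv_var fun n => if n = 0 then a else b using 2
  · funext j; fin_cases j <;> rfl
  · simp

theorem eqv_malcev_right (hm : Eqv Γ (m.rename ![0, 0, 1]) (.var 1)) {X : Type} (a b : X) :
    Eqv Γ (m.rename ![a, a, b]) (.var b) := by
  convert hm.rename_of_rename_eqv_var fun n => if n = 0 then a else b using 2
  · funext j; fin_cases j <;> rfl
  · simp

theorem weakIndepAt_of_rename_eqv_var {k : Fin 3} {v : Fin 3 → ℕ} {y : ℕ}
    (h : Eqv Γ (m.rename v) (.var y)) (hk : v k ≠ y) : WeakIndepAt Γ m k :=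
  ⟨v k, y, v, .var (), hk, rfl, h⟩

/-- Both sides of `IndepAt` are specialised to `v` and `w` by sending `0 ↦ v k`, `1 ↦ w k`
and `j + 2 ↦ v j`. -/
theorem IndepAt.eqv_of_forall_ne_eq {k : Fin 3} (hk : IndepAt Γ m k) {X : Type}
    {v w : Fin 3 → X} (hvw : ∀ j ≠ k, v j = w j) : Eqv Γ (m.rename v) (m.rename w) := by
  let φ : ℕ → X := fun
    | 0 => v k
    | 1 => w k
    | n + 2 => v (Fin.ofNat 3 n)
  have h := hk.rename φ
  simp only [Term.rename_rename] at h
  convert h using 2 <;> funext j <;> by_cases hj : j = k <;> simp [φ, hj, hvw]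

theorem IndepAt.var_eqv_var {k : Fin 3} (hk : IndepAt Γ m k) {X : Type} {v w : Fin 3 → X}
    {x y : X} (hv : Eqv Γ (m.rename v) (.var x)) (hw : Eqv Γ (m.rename w) (.var y))
    (hvw : ∀ j ≠ k, v j = w j) : Eqv Γ (.var x) (.var y) :=
  hv.symm.trans ((hk.eqv_of_forall_ne_eq hvw).trans hw)

end Malcev

/-- A Mal'cev term is weakly independent of each of its three argument positions,
but (provided `Σ` is consistent, i.e. `V(Σ)` has an algebra with at least two
elements) independent of none of them. -/
theorem malcev_weakIndep_not_indep
    (Γ : Set (Term S ℕ × Term S ℕ)) (m : Term S (Fin 3))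
    (hm₁ : Eqv Γ (m.rename ![0, 1, 1]) (Term.var 0 : Term S ℕ))
    (hm₂ : Eqv Γ (m.rename ![0, 0, 1]) (Term.var 1 : Term S ℕ)) :
    (∀ k : Fin 3, WeakIndepAt Γ m k) ∧
    (¬ Eqv Γ (Term.var 0 : Term S ℕ) (Term.var 1) → ∀ k : Fin 3, ¬ IndepAt Γ m k) := by
  refine ⟨fun k => ?_, fun hne k hk => hne ?_⟩
  · fin_cases k
    · exact weakIndepAt_of_rename_eqv_var hm₂ (by decide)
    · exact weakIndepAt_of_rename_eqv_var hm₂ (by decide)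
    · exact weakIndepAt_of_rename_eqv_var (eqv_malcev_left hm₁ 1 0) (by decide)
  · fin_cases k
    · exact hk.var_eqv_var hm₁ (eqv_malcev_left hm₁ 1 1) (by decide)
    · exact hk.var_eqv_var hm₁ hm₂ (by decide)
    · exact hk.var_eqv_var (eqv_malcev_right hm₂ 0 0) hm₂ (by decide)

end UA
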